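/- For any atlas 𝒜 in ℝ^N and any Ω₁, Ω₂ ∈ C(𝒜), the chain of inequalities d_{HP}(∂Ω₁, ∂Ω₂) ≤ d^{HP}(∂Ω₁, ∂Ω₂) ≤ d_𝒜(Ω₁, Ω₂) holds, where d_{HP} is the lower Hausdorff–Pompeiu deviation, d^{HP} is the Hausdorff–Pompeiu distance, and d_𝒜 is the atlas distance. -/

import Mathlib

open Metric Set

/-- An atlas in `ℝ^{n+1}`: rotations `r_j` and cuboids `r_j(V_j) = Π_i (a_{ij}, b_{ij})`. -/
structure Atlas (n : ℕ) where
  s : ℕ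
  s' : ℕ
  hs' : s' ≤ s
  ρ : ℝ
  ρpos : 0 < ρ
  r : Fin s → (EuclideanSpace ℝ (Fin (n+1)) ≃ₗᵢ[ℝ] EuclideanSpace ℝ (Fin (n+1)))
  a : Fin s → Fin (n+1) → ℝ
  b : Fin s → Fin (n+1) → ℝ
  hab : ∀ j i, a j i < b j i

namespace Atlas

variable {n : ℕ} (A : Atlas n)

/-- The cuboid `V_j` (in the original coordinates). -/
def V (j : Fin A.s) : Set (EuclideanSpace ℝ (Fin (n+1))) :=
  (A.r j) ⁻¹' {x | ∀ i, A.a j i < x i ∧ x i < A.b j i}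

/-- The base cuboid `W_j ⊂ ℝ^n`. -/
def W (j : Fin A.s) : Set (EuclideanSpace ℝ (Fin n)) :=
  {x | ∀ i : Fin n, A.a j i.castSucc < x i ∧ x i < A.b j i.castSucc}

/-- First `n` coordinates of a point of `ℝ^{n+1}`. -/
noncomputable def bar {n : ℕ} (x : EuclideanSpace ℝ (Fin (n+1))) : EuclideanSpace ℝ (Fin n) :=
  (EuclideanSpace.equiv (Fin n) ℝ).symm (fun i => x i.castSucc)

/-- `Ω ∈ C(𝒜)` with local boundary functions `g`: `Ω` is open and nonempty, covered by
the sets `(V_j)_ρ`, in each chart `r_j(Ω ∩ V_j)` is the subgraph of the continuous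
function `g j`, `V_j` meets `∂Ω` exactly for `j < s'`, and `a_{Nj}+ρ ≤ g_j ≤ b_{Nj}−ρ`
there (while `g_j = b_{Nj}` for `j ≥ s'`). -/
def IsRep (Ω : Set (EuclideanSpace ℝ (Fin (n+1)))) (g : Fin A.s → EuclideanSpace ℝ (Fin n) → ℝ) : Prop :=
  IsOpen Ω ∧ Ω.Nonempty ∧ Bornology.IsBounded Ω ∧
  (∀ j, ContinuousOn (g j) (closure (A.W j))) ∧
  (Ω ⊆ ⋃ j, {x ∈ A.V j | A.ρ < infDist x (frontier (A.V j))}) ∧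
  (∀ j, (A.r j) '' (Ω ∩ A.V j) =
    {x | bar x ∈ A.W j ∧ A.a j (Fin.last n) < x (Fin.last n) ∧
      x (Fin.last n) < g j (bar x)}) ∧
  (∀ j : Fin A.s, (j : ℕ) < A.s' ↔ (A.V j ∩ frontier Ω).Nonempty) ∧
  (∀ j : Fin A.s, (j : ℕ) < A.s' → ∀ x ∈ closure (A.W j),
    A.a j (Fin.last n) + A.ρ ≤ g j x ∧ g j x ≤ A.b j (Fin.last n) - A.ρ) ∧
  (∀ j : Fin A.s, A.s' ≤ (j : ℕ) → ∀ x ∈ closure (A.W j), g j x = A.b j (Fin.last n))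

/-- The atlas distance: maximum over charts of the sup-norm difference of the
local boundary functions. -/
noncomputable def adist (g₁ g₂ : Fin A.s → EuclideanSpace ℝ (Fin n) → ℝ) : ℝ :=
  ⨆ j : Fin A.s, ⨆ x : closure (A.W j), |g₁ j x - g₂ j x|

end Atlas

open Atlas

/-! A boundary point `x` of `Ω₁` lies in some cuboid `V_j`, since the cover of `Ω₁` by the
`ρ`-interiors of the `V_j` passes to the closure with `ρ ≤ d(x, ∂V_j)`. In the chart coordinates
`y = r_j x` the point `y` is on the graph of `g_{1j}`. As `V_j` meets `∂Ω₁`, `j < s'`, so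
`a_{Nj} + ρ ≤ g_{2j} ≤ b_{Nj} − ρ`: moving `y` vertically to the height `g_{2j}(ȳ)` stays in the
cuboid and lands on the graph of `g_{2j}`, which is a point of `∂Ω₂` at distance
`|g_{1j}(ȳ) − g_{2j}(ȳ)| ≤ d_𝒜(Ω₁, Ω₂)` from `x`. -/

open Filter Topology

section Graph

variable {m n : ℕ}

def openBox (a b : Fin m → ℝ) : Set (EuclideanSpace ℝ (Fin m)) :=
  {x | ∀ i, a i < x i ∧ x i < b i}

lemma isOpen_openBox (a b : Fin m → ℝ) : IsOpen (openBox a b) := by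
  have hbox : openBox a b = ⋂ i, (fun x : EuclideanSpace ℝ (Fin m) => x i) ⁻¹' Ioo (a i) (b i) := by
    ext x
    simp [openBox]
  rw [hbox]
  exact isOpen_iInter_of_finite fun i => isOpen_Ioo.preimage (PiLp.continuous_apply 2 _ i)

lemma isCompact_closure_openBox (a b : Fin m → ℝ) : IsCompact (closure (openBox a b)) := by
  have hK : IsCompact ((EuclideanSpace.equiv (Fin m) ℝ).toHomeomorph ⁻¹' Icc a b) :=
    (Homeomorph.isCompact_preimage _).2 isCompact_Icc
  exact hK.of_isClosed_subset isClosed_closure <|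
    closure_minimal (fun x hx => ⟨fun i => (hx i).1.le, fun i => (hx i).2.le⟩) hK.isClosed

lemma bar_apply (x : EuclideanSpace ℝ (Fin (n+1))) (i : Fin n) : bar x i = x i.castSucc := rfl

lemma continuous_bar : Continuous (bar (n := n)) :=
  (EuclideanSpace.equiv (Fin n) ℝ).symm.continuous.comp <|
    continuous_pi fun i => PiLp.continuous_apply 2 _ i.castSucc

lemma bar_add_single_last (y : EuclideanSpace ℝ (Fin (n+1))) (t : ℝ) :
    bar (y + EuclideanSpace.single (Fin.last n) t) = bar y := by
  ext i
  simp [bar_apply, (Fin.castSucc_lt_last i).ne]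

@[fun_prop]
lemma continuous_euclideanSpace_single {ι : Type*} [DecidableEq ι] (i : ι) :
    Continuous fun t : ℝ => EuclideanSpace.single i t :=
  (PiLp.continuous_toLp 2 _).comp (continuous_single (A := fun _ : ι => ℝ) i)

def subgraph (W : Set (EuclideanSpace ℝ (Fin n))) (a : ℝ) (g : EuclideanSpace ℝ (Fin n) → ℝ) :
    Set (EuclideanSpace ℝ (Fin (n+1))) :=
  {x | bar x ∈ W ∧ a < x (Fin.last n) ∧ x (Fin.last n) < g (bar x)}

variable {U U₁ U₂ Q : Set (EuclideanSpace ℝ (Fin (n+1)))} {W : Set (EuclideanSpace ℝ (Fin n))}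
  {a : ℝ} {g g₁ g₂ : EuclideanSpace ℝ (Fin n) → ℝ}

lemma last_eq_of_mem_frontier (hU : IsOpen U) (hQ : IsOpen Q)
    (hQW : ∀ x ∈ Q, bar x ∈ W ∧ a < x (Fin.last n)) (hUQ : U ∩ Q = subgraph W a g)
    (hg : ContinuousOn g (closure W)) {y : EuclideanSpace ℝ (Fin (n+1))}
    (hy : y ∈ frontier U) (hyQ : y ∈ Q) : y (Fin.last n) = g (bar y) := by
  refine le_antisymm ?_ ?_
  · have hy' : y ∈ closure (U ∩ Q) := by
      rw [inter_comm]
      exact hQ.inter_closure ⟨hyQ, hy.1⟩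
    have hbar : MapsTo bar (U ∩ Q) W := fun x hx => (hUQ ▸ hx).1
    refine le_on_closure (fun x hx => ?_) (PiLp.continuous_apply 2 _ _).continuousOn
      (hg.comp continuous_bar.continuousOn (hbar.closure continuous_bar)) hy'
    exact (hUQ ▸ hx : x ∈ subgraph W a g).2.2.le
  · by_contra! hlt
    have hyUQ : y ∈ U ∩ Q := hUQ ▸ ⟨(hQW y hyQ).1, (hQW y hyQ).2, hlt⟩
    exact hy.2 (hU.interior_eq.symm ▸ hyUQ.1)

lemma mem_frontier_of_last_eq (hU : IsOpen U) (hQ : IsOpen Q)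
    (hQW : ∀ x ∈ Q, bar x ∈ W ∧ a < x (Fin.last n)) (hUQ : U ∩ Q = subgraph W a g)
    {z : EuclideanSpace ℝ (Fin (n+1))} (hzQ : z ∈ Q) (hz : z (Fin.last n) = g (bar z)) :
    z ∈ frontier U := by
  rw [hU.frontier_eq]
  refine ⟨?_, fun hzU => ?_⟩
  · have hlim : Tendsto (fun t : ℝ => z + EuclideanSpace.single (Fin.last n) (-t))
        (𝓝[>] 0) (𝓝 z) := by
      have hcont : Continuous fun t : ℝ => z + EuclideanSpace.single (Fin.last n) (-t) := by
        fun_prop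
      exact (hcont.tendsto' 0 z (by simp)).mono_left nhdsWithin_le_nhds
    refine mem_closure_of_tendsto hlim ?_
    filter_upwards [hlim (hQ.mem_nhds hzQ), self_mem_nhdsWithin] with t htQ ht
    set zt := z + EuclideanSpace.single (Fin.last n) (-t)
    have hbelow : zt (Fin.last n) < g (bar zt) := by
      simp only [zt, PiLp.add_apply, PiLp.single_eq_same, bar_add_single_last]
      linarith [mem_Ioi.1 ht]
    exact (hUQ ▸ ⟨(hQW zt htQ).1, (hQW zt htQ).2, hbelow⟩ : zt ∈ U ∩ Q).1
  · exact (hUQ ▸ ⟨hzU, hzQ⟩ : z ∈ subgraph W a g).2.2.ne hz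

lemma infDist_frontier_le_abs_sub (hU₁ : IsOpen U₁) (hU₂ : IsOpen U₂) (hQ : IsOpen Q)
    (hQW : ∀ x ∈ Q, bar x ∈ W ∧ a < x (Fin.last n))
    (h₁ : U₁ ∩ Q = subgraph W a g₁) (h₂ : U₂ ∩ Q = subgraph W a g₂)
    (hg₁ : ContinuousOn g₁ (closure W)) {y : EuclideanSpace ℝ (Fin (n+1))}
    (hy : y ∈ frontier U₁) (hyQ : y ∈ Q)
    (hzQ : y + EuclideanSpace.single (Fin.last n) (g₂ (bar y) - y (Fin.last n)) ∈ Q) :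
    infDist y (frontier U₂) ≤ |g₁ (bar y) - g₂ (bar y)| := by
  have hy₁ := last_eq_of_mem_frontier hU₁ hQ hQW h₁ hg₁ hy hyQ
  have hz := mem_frontier_of_last_eq hU₂ hQ hQW h₂ hzQ (by simp [bar_add_single_last])
  calc infDist y (frontier U₂)
      ≤ dist y (y + EuclideanSpace.single (Fin.last n) (g₂ (bar y) - y (Fin.last n))) :=
        infDist_le_dist_of_mem hz
    _ = |g₁ (bar y) - g₂ (bar y)| := by simp [hy₁, abs_sub_comm]

end Graph

namespace Atlas

variable {n : ℕ} {A : Atlas n}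

lemma isOpen_V (j : Fin A.s) : IsOpen (A.V j) :=
  (isOpen_openBox (A.a j) (A.b j)).preimage (A.r j).continuous

namespace IsRep

variable {Ω : Set (EuclideanSpace ℝ (Fin (n+1)))} {g : Fin A.s → EuclideanSpace ℝ (Fin n) → ℝ}

lemma exists_mem_V (h : A.IsRep Ω g) {x : EuclideanSpace ℝ (Fin (n+1))} (hx : x ∈ closure Ω) :
    ∃ j, x ∈ A.V j := by
  obtain ⟨-, -, -, -, hcov, -⟩ := h
  have hx' := closure_mono hcov hx
  rw [closure_iUnion_of_finite, mem_iUnion] at hx'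
  obtain ⟨j, hj⟩ := hx'
  have hρ : A.ρ ≤ infDist x (frontier (A.V j)) :=
    closure_lt_subset_le continuous_const (continuous_infDist_pt _)
      (closure_mono (fun y hy => hy.2) hj)
  refine ⟨j, by_contra fun hxV => ?_⟩
  have hfr : x ∈ frontier (A.V j) :=
    ⟨closure_mono (fun y hy => hy.1) hj, by rwa [(isOpen_V j).interior_eq]⟩
  linarith [infDist_zero_of_mem hfr, A.ρpos]

lemma isOpen_image (h : A.IsRep Ω g) (j : Fin A.s) : IsOpen (A.r j '' Ω) :=
  (A.r j).toHomeomorph.isOpenMap _ h.1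

lemma image_inter_openBox (h : A.IsRep Ω g) (j : Fin A.s) :
    A.r j '' Ω ∩ openBox (A.a j) (A.b j) = subgraph (A.W j) (A.a j (Fin.last n)) (g j) := by
  rw [← image_inter_preimage]
  exact h.2.2.2.2.2.1 j

end IsRep

variable (g₁ g₂ : Fin A.s → EuclideanSpace ℝ (Fin n) → ℝ)

lemma adist_nonneg : 0 ≤ A.adist g₁ g₂ :=
  Real.iSup_nonneg fun _ => Real.iSup_nonneg fun _ => abs_nonneg _

lemma adist_comm : A.adist g₁ g₂ = A.adist g₂ g₁ := by
  simp only [adist, abs_sub_comm]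

variable {g₁ g₂}

lemma abs_sub_le_adist (hg₁ : ∀ j, ContinuousOn (g₁ j) (closure (A.W j)))
    (hg₂ : ∀ j, ContinuousOn (g₂ j) (closure (A.W j))) (j : Fin A.s)
    {x : EuclideanSpace ℝ (Fin n)} (hx : x ∈ closure (A.W j)) :
    |g₁ j x - g₂ j x| ≤ A.adist g₁ g₂ := by
  have hbdd : BddAbove (range fun y : closure (A.W j) => |g₁ j y - g₂ j y|) := by
    rw [← image_eq_range (fun y => |g₁ j y - g₂ j y|)]
    exact (isCompact_closure_openBox _ _).bddAbove_image ((hg₁ j).sub (hg₂ j)).abs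
  exact (le_ciSup hbdd ⟨x, hx⟩).trans <|
    le_ciSup (f := fun j => ⨆ y : closure (A.W j), |g₁ j y - g₂ j y|) (finite_range _).bddAbove j

lemma infDist_frontier_le_adist {Ω₁ Ω₂ : Set (EuclideanSpace ℝ (Fin (n+1)))}
    (h₁ : A.IsRep Ω₁ g₁) (h₂ : A.IsRep Ω₂ g₂) {x : EuclideanSpace ℝ (Fin (n+1))}
    (hx : x ∈ frontier Ω₁) : infDist x (frontier Ω₂) ≤ A.adist g₁ g₂ := by
  obtain ⟨-, -, -, hg₁, -, -, hs₁, -, -⟩ := id h₁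
  obtain ⟨-, -, -, hg₂, -, -, -, hb₂, -⟩ := id h₂
  obtain ⟨j, hxj⟩ := h₁.exists_mem_V hx.1
  set y := A.r j x
  have hQW : ∀ z ∈ openBox (A.a j) (A.b j), bar z ∈ A.W j ∧ A.a j (Fin.last n) < z (Fin.last n) :=
    fun z hz => ⟨fun i => hz i.castSucc, (hz _).1⟩
  have hyW : bar y ∈ A.W j := (hQW y hxj).1
  have hzQ : y + EuclideanSpace.single (Fin.last n) (g₂ j (bar y) - y (Fin.last n)) ∈
      openBox (A.a j) (A.b j) := by
    obtain ⟨hlo, hhi⟩ := hb₂ j ((hs₁ j).2 ⟨x, hxj, hx⟩) (bar y) (subset_closure hyW)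
    intro i
    induction i using Fin.lastCases with
    | last =>
      simp only [PiLp.add_apply, PiLp.single_eq_same, add_sub_cancel]
      constructor <;> linarith [A.ρpos]
    | cast i => simpa [(Fin.castSucc_lt_last i).ne] using hxj i.castSucc
  have hfr : ∀ Ω, A.r j '' frontier Ω = frontier (A.r j '' Ω) :=
    (A.r j).toHomeomorph.image_frontier
  calc infDist x (frontier Ω₂) = infDist y (frontier (A.r j '' Ω₂)) := by
        rw [← hfr, infDist_image (A.r j).isometry]
    _ ≤ |g₁ j (bar y) - g₂ j (bar y)| :=
        infDist_frontier_le_abs_sub (h₁.isOpen_image j) (h₂.isOpen_image j) (isOpen_openBox _ _)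
          hQW (h₁.image_inter_openBox j) (h₂.image_inter_openBox j) (hg₁ j)
          (hfr Ω₁ ▸ mem_image_of_mem _ hx) hxj hzQ
    _ ≤ A.adist g₁ g₂ := abs_sub_le_adist hg₁ hg₂ j (subset_closure hyW)

end Atlas

/-- For `Ω₁, Ω₂ ∈ C(𝒜)`: the lower Hausdorff–Pompeiu deviation of the boundaries
is at most the Hausdorff–Pompeiu distance of the boundaries, which in turn is at
most the atlas distance `d_𝒜(Ω₁,Ω₂)`. -/
theorem hp_le_atlasDist {n : ℕ} (A : Atlas n)
    (Ω₁ Ω₂ : Set (EuclideanSpace ℝ (Fin (n+1))))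
    (g₁ g₂ : Fin A.s → EuclideanSpace ℝ (Fin n) → ℝ)
    (h₁ : A.IsRep Ω₁ g₁) (h₂ : A.IsRep Ω₂ g₂) :
    min (⨆ x : frontier Ω₁, infDist (x : EuclideanSpace ℝ (Fin (n+1))) (frontier Ω₂))
        (⨆ x : frontier Ω₂, infDist (x : EuclideanSpace ℝ (Fin (n+1))) (frontier Ω₁)) ≤
      max (⨆ x : frontier Ω₁, infDist (x : EuclideanSpace ℝ (Fin (n+1))) (frontier Ω₂))
        (⨆ x : frontier Ω₂, infDist (x : EuclideanSpace ℝ (Fin (n+1))) (frontier Ω₁)) ∧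
    max (⨆ x : frontier Ω₁, infDist (x : EuclideanSpace ℝ (Fin (n+1))) (frontier Ω₂))
        (⨆ x : frontier Ω₂, infDist (x : EuclideanSpace ℝ (Fin (n+1))) (frontier Ω₁)) ≤
      A.adist g₁ g₂ := by
  refine ⟨min_le_max, max_le ?_ ?_⟩
  · exact Real.iSup_le (fun x => infDist_frontier_le_adist h₁ h₂ x.2) (adist_nonneg g₁ g₂)
  · refine Real.iSup_le (fun x => ?_) (adist_nonneg g₁ g₂)
    rw [adist_comm]
    exact infDist_frontier_le_adist h₂ h₁ x.2
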